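/- arXiv:2604.05882 — 3 statements merged into one kernel-verified Lean document; each statement's English description precedes it below -/
import Mathlib

section
/- Let x₁, x₂ : ℝ → ℝ be differentiable on [0,1] with x₂' continuous on [0,1], and suppose x₁'(t) = x₂(t) for all t ∈ [0,1], x₁(0) = 0, x₂(0) = 0, and x₁(1) = 1. Then ∫₀¹ (x₂(t) + (x₂'(t))²) dt ≥ 4. Moreover, equality holds for x₂(t) = 3t − (3/2)t² and x₁(t) = (3/2)t² − (1/2)t³ (with control u(t) = x₂'(t) = 3 − 3t). -/
/-- Global optimality of the Pontryagin extremal for the two-state problem: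
minimize `∫₀¹ (x₂ + u²) dt` with `ẋ₁ = x₂`, `ẋ₂ = u`, `x₁(0)=0`, `x₂(0)=0`,
`x₁(1)=1`. The optimal value is `4`, attained at `x₂(t) = 3t − (3/2)t²`,
`x₁(t) = (3/2)t² − (1/2)t³` (control `u = 3 − 3t`). -/
theorem stmt_7 (x₁ x₂ : ℝ → ℝ)
    (hx₂ : ∀ t ∈ Set.Icc (0:ℝ) 1, DifferentiableAt ℝ x₂ t)
    (hx₂' : ContinuousOn (deriv x₂) (Set.Icc (0:ℝ) 1))
    (hx₁ : ∀ t ∈ Set.Icc (0:ℝ) 1, HasDerivAt x₁ (x₂ t) t)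
    (h10 : x₁ 0 = 0) (h20 : x₂ 0 = 0) (h11 : x₁ 1 = 1) :
    (4 ≤ ∫ t in (0:ℝ)..1, (x₂ t + (deriv x₂ t) ^ 2)) ∧
    ((∀ t : ℝ, HasDerivAt (fun s => 3 / 2 * s ^ 2 - 1 / 2 * s ^ 3 : ℝ → ℝ)
        (3 * t - 3 / 2 * t ^ 2) t) ∧
      (3 / 2 * (0:ℝ) ^ 2 - 1 / 2 * (0:ℝ) ^ 3 = 0) ∧
      (3 * (0:ℝ) - 3 / 2 * (0:ℝ) ^ 2 = 0) ∧
      (3 / 2 * (1:ℝ) ^ 2 - 1 / 2 * (1:ℝ) ^ 3 = 1) ∧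
      (∫ t in (0:ℝ)..1, ((3 * t - 3 / 2 * t ^ 2) +
        (deriv (fun s => 3 * s - 3 / 2 * s ^ 2 : ℝ → ℝ) t) ^ 2)) = 4) := by
  have h01 : (0:ℝ) ≤ 1 := by norm_num
  have huIcc : Set.uIcc (0:ℝ) 1 = Set.Icc (0:ℝ) 1 := Set.uIcc_of_le h01
  set u := deriv x₂ with hu
  have hx₂cont : ContinuousOn x₂ (Set.Icc (0:ℝ) 1) := fun t ht =>
    (hx₂ t ht).continuousAt.continuousWithinAt
  have hucont : ContinuousOn u (Set.Icc (0:ℝ) 1) := hx₂'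
  have hx₂int : IntervalIntegrable x₂ MeasureTheory.volume 0 1 := by
    apply ContinuousOn.intervalIntegrable; rwa [huIcc]
  have huint : IntervalIntegrable u MeasureTheory.volume 0 1 := by
    apply ContinuousOn.intervalIntegrable; rwa [huIcc]
  have hwcont : ContinuousOn (fun t : ℝ => (1 - t) * u t) (Set.Icc (0:ℝ) 1) :=
    (continuousOn_const.sub continuousOn_id).mul hucont
  have hwint : IntervalIntegrable (fun t : ℝ => (1 - t) * u t) MeasureTheory.volume 0 1 := by
    apply ContinuousOn.intervalIntegrable; rwa [huIcc]
  -- ∫₀¹ x₂ = 1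
  have hI1 : (∫ t in (0:ℝ)..1, x₂ t) = 1 := by
    have h := intervalIntegral.integral_eq_sub_of_hasDerivAt
      (f := x₁) (f' := x₂) (fun t ht => hx₁ t (huIcc ▸ ht)) hx₂int
    rw [h, h11, h10]; ring
  -- ∫₀¹ (1-t) u t = 1
  have hI2 : (∫ t in (0:ℝ)..1, (1 - t) * u t) = 1 := by
    have hderiv : ∀ t ∈ Set.uIcc (0:ℝ) 1,
        HasDerivAt (fun s => (1 - s) * x₂ s) ((1 - t) * u t - x₂ t) t := by
      intro t ht
      rw [huIcc] at ht
      have h1 : HasDerivAt (fun s : ℝ => 1 - s) (-1) t := by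
        simpa using (hasDerivAt_id t).const_sub 1
      have h2 : HasDerivAt x₂ (u t) t := (hx₂ t ht).hasDerivAt
      have := h1.mul h2
      exact this.congr_deriv (by ring)
    have hint : IntervalIntegrable (fun t : ℝ => (1 - t) * u t - x₂ t)
        MeasureTheory.volume 0 1 := hwint.sub hx₂int
    have h := intervalIntegral.integral_eq_sub_of_hasDerivAt hderiv hint
    rw [intervalIntegral.integral_sub hwint hx₂int, hI1] at h
    simp [h20] at h
    linarith
  -- ∫₀¹ u² ≥ 3
  have hsqcont : ContinuousOn (fun t : ℝ => (u t) ^ 2) (Set.Icc (0:ℝ) 1) := hucont.pow 2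
  have hsqint : IntervalIntegrable (fun t : ℝ => (u t) ^ 2) MeasureTheory.volume 0 1 := by
    apply ContinuousOn.intervalIntegrable; rwa [huIcc]
  have hqint : IntervalIntegrable (fun t : ℝ => 9 * (1 - t) ^ 2) MeasureTheory.volume 0 1 := by
    apply ContinuousOn.intervalIntegrable
    exact (continuousOn_const.mul (((continuousOn_const.sub continuousOn_id).pow 2)))
  have hqval : (∫ t in (0:ℝ)..1, 9 * (1 - t) ^ 2) = 3 := by
    have hderiv : ∀ t ∈ Set.uIcc (0:ℝ) 1,
        HasDerivAt (fun s : ℝ => -3 * (1 - s) ^ 3) (9 * (1 - t) ^ 2) t := by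
      intro t _
      have h1 : HasDerivAt (fun s : ℝ => 1 - s) (-1) t := by
        simpa using (hasDerivAt_id t).const_sub 1
      have := (h1.pow 3).const_mul (-3 : ℝ)
      exact this.congr_deriv (by ring)
    rw [intervalIntegral.integral_eq_sub_of_hasDerivAt hderiv hqint]
    norm_num
  have hsplit : (∫ t in (0:ℝ)..1, (u t - 3 * (1 - t)) ^ 2)
      = (∫ t in (0:ℝ)..1, (u t) ^ 2) - 6 * (∫ t in (0:ℝ)..1, (1 - t) * u t)
        + (∫ t in (0:ℝ)..1, 9 * (1 - t) ^ 2) := by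
    rw [← intervalIntegral.integral_const_mul,
      ← intervalIntegral.integral_sub hsqint (hwint.const_mul 6),
      ← intervalIntegral.integral_add (hsqint.sub (hwint.const_mul 6)) hqint]
    apply intervalIntegral.integral_congr
    intro t _
    ring
  have hsqnn : 0 ≤ ∫ t in (0:ℝ)..1, (u t - 3 * (1 - t)) ^ 2 :=
    intervalIntegral.integral_nonneg h01 (fun t _ => sq_nonneg _)
  have hI3 : 3 ≤ ∫ t in (0:ℝ)..1, (u t) ^ 2 := by
    rw [hsplit, hI2, hqval] at hsqnn; linarith
  constructor
  · rw [intervalIntegral.integral_add hx₂int hsqint, hI1]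
    linarith
  refine ⟨?_, by norm_num, by norm_num, by norm_num, ?_⟩
  · intro t
    have h1 : HasDerivAt (fun s : ℝ => 3 / 2 * s ^ 2) (3 * t) t := by
      have := (hasDerivAt_pow 2 t).const_mul (3 / 2 : ℝ)
      exact this.congr_deriv (by ring)
    have h2 : HasDerivAt (fun s : ℝ => 1 / 2 * s ^ 3) (3 / 2 * t ^ 2) t := by
      have := (hasDerivAt_pow 3 t).const_mul (1 / 2 : ℝ)
      exact this.congr_deriv (by ring)
    exact h1.sub h2
  · have hd : ∀ t : ℝ, deriv (fun s => 3 * s - 3 / 2 * s ^ 2 : ℝ → ℝ) t = 3 - 3 * t := by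
      intro t
      have h1 : HasDerivAt (fun s : ℝ => 3 * s - 3 / 2 * s ^ 2) (3 - 3 * t) t := by
        have ha : HasDerivAt (fun s : ℝ => 3 * s) 3 t := by
          simpa using (hasDerivAt_id t).const_mul (3 : ℝ)
        have hb : HasDerivAt (fun s : ℝ => 3 / 2 * s ^ 2) (3 * t) t := by
          have := (hasDerivAt_pow 2 t).const_mul (3 / 2 : ℝ)
          exact this.congr_deriv (by ring)
        exact ha.sub hb
      exact h1.deriv
    have hcongr : (∫ t in (0:ℝ)..1, ((3 * t - 3 / 2 * t ^ 2) +
        (deriv (fun s => 3 * s - 3 / 2 * s ^ 2 : ℝ → ℝ) t) ^ 2))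
        = ∫ t in (0:ℝ)..1, (9 - 15 * t + 15 / 2 * t ^ 2) := by
      apply intervalIntegral.integral_congr
      intro t _
      simp only [hd]
      ring
    rw [hcongr]
    have hderiv : ∀ t ∈ Set.uIcc (0:ℝ) 1,
        HasDerivAt (fun s : ℝ => 9 * s - 15 / 2 * s ^ 2 + 5 / 2 * s ^ 3)
          (9 - 15 * t + 15 / 2 * t ^ 2) t := by
      intro t _
      have ha : HasDerivAt (fun s : ℝ => 9 * s) 9 t := by
        simpa using (hasDerivAt_id t).const_mul (9 : ℝ)
      have hb : HasDerivAt (fun s : ℝ => 15 / 2 * s ^ 2) (15 * t) t := by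
        have := (hasDerivAt_pow 2 t).const_mul (15 / 2 : ℝ)
        exact this.congr_deriv (by ring)
      have hc : HasDerivAt (fun s : ℝ => 5 / 2 * s ^ 3) (15 / 2 * t ^ 2) t := by
        have := (hasDerivAt_pow 3 t).const_mul (5 / 2 : ℝ)
        exact this.congr_deriv (by ring)
      exact (ha.sub hb).add hc
    have hpint : IntervalIntegrable (fun t : ℝ => 9 - 15 * t + 15 / 2 * t ^ 2)
        MeasureTheory.volume 0 1 := by
      apply Continuous.intervalIntegrable
      continuity
    rw [intervalIntegral.integral_eq_sub_of_hasDerivAt hderiv hpint]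
    norm_num
end

section
/- Let T > 0 and x₀ ∈ ℝ. For every function x : ℝ → ℝ differentiable on [0,T] with continuous derivative on [0,T] and x(0) = x₀, we have ∫₀ᵀ (x(t)² + x'(t)²) dt ≥ x₀² · tanh(T). Moreover, equality holds for x*(t) = x₀·(eᵗ + e^{2T−t})/(1 + e^{2T}). -/
open Real intervalIntegral

private lemma hasDerivAt_tanh' (y : ℝ) :
    HasDerivAt Real.tanh (1 - Real.tanh y ^ 2) y := by
  have h := (Real.hasDerivAt_sinh y).div (Real.hasDerivAt_cosh y) (ne_of_gt (Real.cosh_pos y))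
  have hfun : (fun x => Real.sinh x / Real.cosh x) = Real.tanh := by
    funext x; rw [Real.tanh_eq_sinh_div_cosh]
  rw [show (Real.sinh / Real.cosh) = (fun x => Real.sinh x / Real.cosh x) from rfl, hfun] at h
  refine h.congr_deriv ?_
  rw [Real.tanh_eq_sinh_div_cosh]
  have hc := (Real.cosh_pos y).ne'
  field_simp

private lemma continuous_tanh' : Continuous Real.tanh := by
  rw [continuous_iff_continuousAt]
  exact fun y => (hasDerivAt_tanh' y).differentiableAt.continuousAt

private lemma key (T : ℝ) (hT : 0 < T) (x : ℝ → ℝ)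
    (hd : ∀ t ∈ Set.Icc (0:ℝ) T, DifferentiableAt ℝ x t)
    (hc : ContinuousOn (deriv x) (Set.Icc (0:ℝ) T)) :
    ∫ t in (0:ℝ)..T, (x t ^ 2 + deriv x t ^ 2)
      = (∫ t in (0:ℝ)..T, (deriv x t + Real.tanh (T - t) * x t) ^ 2)
        + x 0 ^ 2 * Real.tanh T := by
  have hxc : ContinuousOn x (Set.Icc (0:ℝ) T) := fun t ht => (hd t ht).continuousAt.continuousWithinAt
  have huIcc : Set.uIcc (0:ℝ) T = Set.Icc 0 T := Set.uIcc_of_le hT.le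
  -- F t = tanh (T - t) * x t ^ 2
  set F : ℝ → ℝ := fun t => Real.tanh (T - t) * x t ^ 2 with hF
  have hder : ∀ t ∈ Set.uIcc (0:ℝ) T,
      HasDerivAt F ((deriv x t + Real.tanh (T - t) * x t) ^ 2 - (x t ^ 2 + deriv x t ^ 2)) t := by
    intro t ht
    rw [huIcc] at ht
    have hx : HasDerivAt x (deriv x t) t := (hd t ht).hasDerivAt
    have hlin : HasDerivAt (fun s : ℝ => T - s) (-1) t := by
      simpa using (hasDerivAt_id t).const_sub T
    have htanh : HasDerivAt (fun s => Real.tanh (T - s))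
        ((1 - Real.tanh (T - t) ^ 2) * (-1)) t :=
      (hasDerivAt_tanh' (T - t)).comp t hlin
    have := htanh.mul (hx.pow 2)
    refine this.congr_deriv ?_
    simp only [Pi.pow_apply]
    ring
  have hcontF : ContinuousOn (fun t => (deriv x t + Real.tanh (T - t) * x t) ^ 2 - (x t ^ 2 + deriv x t ^ 2)) (Set.Icc (0:ℝ) T) := by
    apply ContinuousOn.sub
    · exact ((hc.add ((continuous_tanh'.comp (continuous_const.sub continuous_id)).continuousOn.mul hxc)).pow 2)
    · exact (hxc.pow 2).add (hc.pow 2)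
  have hint : IntervalIntegrable (fun t => (deriv x t + Real.tanh (T - t) * x t) ^ 2 - (x t ^ 2 + deriv x t ^ 2)) MeasureTheory.volume 0 T := by
    apply ContinuousOn.intervalIntegrable; rwa [huIcc]
  have hFTC := intervalIntegral.integral_eq_sub_of_hasDerivAt hder hint
  have h1 : IntervalIntegrable (fun t => (deriv x t + Real.tanh (T - t) * x t) ^ 2) MeasureTheory.volume 0 T := by
    apply ContinuousOn.intervalIntegrable
    rw [huIcc]
    exact (hc.add ((continuous_tanh'.comp (continuous_const.sub continuous_id)).continuousOn.mul hxc)).pow 2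
  have h2 : IntervalIntegrable (fun t => x t ^ 2 + deriv x t ^ 2) MeasureTheory.volume 0 T := by
    apply ContinuousOn.intervalIntegrable
    rw [huIcc]
    exact (hxc.pow 2).add (hc.pow 2)
  rw [intervalIntegral.integral_sub h1 h2] at hFTC
  have hFT : F T = 0 := by simp [hF]
  have hF0 : F 0 = Real.tanh T * x 0 ^ 2 := by simp [hF]
  rw [hFT, hF0] at hFTC
  linarith [hFTC]

/-- Global optimality for the scalar finite-horizon LQR: for every trajectory
with `x(0) = x₀` one has `∫₀ᵀ (x² + x'²) ≥ x₀² tanh T`, with equality for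
`x*(t) = x₀(eᵗ + e^{2T−t})/(1 + e^{2T})`. -/
theorem stmt_10 (T x₀ : ℝ) (hT : 0 < T) :
    (∀ x : ℝ → ℝ, (∀ t ∈ Set.Icc (0:ℝ) T, DifferentiableAt ℝ x t) →
      ContinuousOn (deriv x) (Set.Icc (0:ℝ) T) → x 0 = x₀ →
      x₀ ^ 2 * Real.tanh T ≤ ∫ t in (0:ℝ)..T, (x t ^ 2 + (deriv x t) ^ 2)) ∧
    (∫ t in (0:ℝ)..T,
        ((x₀ * (Real.exp t + Real.exp (2 * T - t)) / (1 + Real.exp (2 * T))) ^ 2 +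
          (deriv (fun s => x₀ * (Real.exp s + Real.exp (2 * T - s)) /
            (1 + Real.exp (2 * T)) : ℝ → ℝ) t) ^ 2))
      = x₀ ^ 2 * Real.tanh T := by
  constructor
  · intro x hd hc hx0
    rw [key T hT x hd hc, hx0]
    have : 0 ≤ ∫ t in (0:ℝ)..T, (deriv x t + Real.tanh (T - t) * x t) ^ 2 :=
      intervalIntegral.integral_nonneg hT.le (fun t _ => sq_nonneg _)
    nlinarith [this]
  · set x : ℝ → ℝ := fun s => x₀ * (Real.exp s + Real.exp (2 * T - s)) / (1 + Real.exp (2 * T)) with hxdef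
    have hD : ∀ t : ℝ, HasDerivAt x (x₀ * (Real.exp t - Real.exp (2 * T - t)) / (1 + Real.exp (2 * T))) t := by
      intro t
      have h1 : HasDerivAt (fun s : ℝ => Real.exp s) (Real.exp t) t := Real.hasDerivAt_exp t
      have h2 : HasDerivAt (fun s : ℝ => Real.exp (2 * T - s)) (Real.exp (2 * T - t) * (-1)) t :=
        (Real.hasDerivAt_exp (2 * T - t)).comp t (by simpa using (hasDerivAt_id t).const_sub (2 * T))
      have := ((h1.add h2).const_mul x₀).div_const (1 + Real.exp (2 * T))
      refine this.congr_deriv ?_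
      ring
    have hderiv : ∀ t : ℝ, deriv x t = x₀ * (Real.exp t - Real.exp (2 * T - t)) / (1 + Real.exp (2 * T)) :=
      fun t => (hD t).deriv
    have hd : ∀ t ∈ Set.Icc (0:ℝ) T, DifferentiableAt ℝ x t := fun t _ => (hD t).differentiableAt
    have hc : ContinuousOn (deriv x) (Set.Icc (0:ℝ) T) := by
      have : deriv x = fun t => x₀ * (Real.exp t - Real.exp (2 * T - t)) / (1 + Real.exp (2 * T)) :=
        funext hderiv
      rw [this]
      exact (((continuous_const.mul (Real.continuous_exp.sub (Real.continuous_exp.comp (continuous_const.sub continuous_id)))).div_const _)).continuousOn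
    have hx0 : x 0 = x₀ := by
      have hne : (1 + Real.exp (2 * T)) ≠ 0 := by positivity
      simp only [hxdef]
      rw [Real.exp_zero, sub_zero]
      field_simp
    -- zero integrand
    have hzero : ∀ t : ℝ, deriv x t + Real.tanh (T - t) * x t = 0 := by
      intro t
      rw [hderiv t, hxdef]
      have hne : (1 + Real.exp (2 * T)) ≠ 0 := by positivity
      have htanh : Real.tanh (T - t) * (Real.exp t + Real.exp (2 * T - t))
          = Real.exp (2 * T - t) - Real.exp t := by
        rw [Real.tanh_eq_sinh_div_cosh, Real.sinh_eq, Real.cosh_eq]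
        have h1 : Real.exp (T - t) + Real.exp (-(T - t)) > 0 := by positivity
        rw [show -(T - t) = t - T by ring]
        have e3 : Real.exp t * Real.exp (T - t) = Real.exp T := by
          rw [← Real.exp_add]; ring_nf
        have e4 : Real.exp (2 * T - t) * Real.exp (t - T) = Real.exp T := by
          rw [← Real.exp_add]; ring_nf
        field_simp
        linear_combination (norm := ring_nf) 2 * e3 - 2 * e4
      field_simp
      linear_combination x₀ * htanh
    have hk := key T hT x hd hc
    have hint0 : (∫ t in (0:ℝ)..T, (deriv x t + Real.tanh (T - t) * x t) ^ 2) = 0 := by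
      have : (fun t => (deriv x t + Real.tanh (T - t) * x t) ^ 2) = fun _ => (0:ℝ) := by
        funext t; rw [hzero t]; ring
      rw [this]; simp
    rw [hint0, zero_add, hx0] at hk
    exact hk
end

section
/- Fix n, m ≥ 1 and T > 0. Let A : ℝ → Matrix n n ℝ, B : ℝ → Matrix n m ℝ, Q : ℝ → Matrix n n ℝ, R : ℝ → Matrix m m ℝ, and M : Matrix n n ℝ, all continuous in t where applicable, with Q(t) and M symmetric positive semidefinite and R(t) symmetric positive definite for all t ∈ [0,T]. Let S : ℝ → Matrix n n ℝ be differentiable with S(t) symmetric, S'(t) = −(A(t)ᵀS(t) + S(t)A(t) − S(t)B(t)R(t)⁻¹B(t)ᵀS(t) + Q(t)) on [0,T], and S(T) = M. For a control u and its trajectory x solving ẋ = A(t)x + B(t)u, x(0) = x₀, define J(u) = (1/2)x(T)ᵀMx(T) + (1/2)∫₀ᵀ(x(t)ᵀQ(t)x(t) + u(t)ᵀR(t)u(t))dt. Then J(u) ≥ (1/2)x₀ᵀS(0)x₀ for every continuous control u with differentiable trajectory, and if x* is a differentiable solution of the closed-loop equation ẋ* = (A − BR⁻¹BᵀS)x*,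 x*(0) = x₀, then the feedback control u*(t) = −R(t)⁻¹B(t)ᵀS(t)x*(t) achieves J(u*) = (1/2)x₀ᵀS(0)x₀; hence u* is optimal. -/
open Matrix

attribute [local instance] Matrix.normedAddCommGroup Matrix.normedSpace


lemma lqr_contOn_mulVec {a b : ℕ} {s : Set ℝ} {Mf : ℝ → Matrix (Fin a) (Fin b) ℝ}
    {vf : ℝ → Fin b → ℝ} (hM : ContinuousOn Mf s) (hv : ContinuousOn vf s) :
    ContinuousOn (fun t => Mf t *ᵥ vf t) s :=
  (continuous_fst.matrix_mulVec continuous_snd).comp_continuousOn (f := fun t => (Mf t, vf t)) (ContinuousOn.prodMk hM hv)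

lemma lqr_contOn_dot {a : ℕ} {s : Set ℝ} {vf wf : ℝ → Fin a → ℝ}
    (hv : ContinuousOn vf s) (hw : ContinuousOn wf s) :
    ContinuousOn (fun t => vf t ⬝ᵥ wf t) s :=
  (continuous_fst.dotProduct continuous_snd).comp_continuousOn (f := fun t => (vf t, wf t)) (ContinuousOn.prodMk hv hw)

lemma lqr_key {n m : ℕ} (S Q Am : Matrix (Fin n) (Fin n) ℝ)
    (Bm : Matrix (Fin n) (Fin m) ℝ) (R : Matrix (Fin m) (Fin m) ℝ)
    (hSsym : Sᵀ = S) (hRs : Rᵀ = R) (hRi : R * R⁻¹ = 1)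
    (x : Fin n → ℝ) (u : Fin m → ℝ) :
    (Am *ᵥ x + Bm *ᵥ u) ⬝ᵥ S *ᵥ x
      + x ⬝ᵥ (-(Amᵀ * S + S * Am - S * Bm * R⁻¹ * Bmᵀ * S + Q)) *ᵥ x
      + x ⬝ᵥ S *ᵥ (Am *ᵥ x + Bm *ᵥ u)
      + (x ⬝ᵥ Q *ᵥ x + u ⬝ᵥ R *ᵥ u)
    = (u + R⁻¹ *ᵥ (Bmᵀ *ᵥ (S *ᵥ x))) ⬝ᵥ R *ᵥ (u + R⁻¹ *ᵥ (Bmᵀ *ᵥ (S *ᵥ x))) := by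
  set w : Fin m → ℝ := Bmᵀ *ᵥ (S *ᵥ x) with hw
  have hBu : (Bm *ᵥ u) ⬝ᵥ (S *ᵥ x) = u ⬝ᵥ w := by
    rw [hw]; conv_rhs => rw [dotProduct_mulVec, vecMul_transpose]
  have hAx : (Am *ᵥ x) ⬝ᵥ (S *ᵥ x) = x ⬝ᵥ ((Amᵀ * S) *ᵥ x) := by
    conv_rhs => rw [← mulVec_mulVec, dotProduct_mulVec, vecMul_transpose]
  have hSB : x ⬝ᵥ S *ᵥ (Bm *ᵥ u) = u ⬝ᵥ w := by
    rw [dotProduct_mulVec, ← mulVec_transpose, hSsym, dotProduct_comm]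
    exact hBu
  have hSA : x ⬝ᵥ S *ᵥ (Am *ᵥ x) = x ⬝ᵥ ((S * Am) *ᵥ x) := by
    rw [mulVec_mulVec]
  have hquad : x ⬝ᵥ ((S * Bm * R⁻¹ * Bmᵀ * S) *ᵥ x) = w ⬝ᵥ (R⁻¹ *ᵥ w) := by
    simp only [Matrix.mul_assoc, ← mulVec_mulVec]
    conv_lhs => rw [dotProduct_mulVec, ← mulVec_transpose, hSsym, dotProduct_mulVec,
      ← mulVec_transpose]
  have hRRinv : ∀ v : Fin m → ℝ, R *ᵥ (R⁻¹ *ᵥ v) = v := by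
    intro v; rw [mulVec_mulVec, hRi, one_mulVec]
  have hRv : (R⁻¹ *ᵥ w) ⬝ᵥ (R *ᵥ u) = w ⬝ᵥ u := by
    rw [dotProduct_mulVec, ← mulVec_transpose, hRs, hRRinv]
  calc (Am *ᵥ x + Bm *ᵥ u) ⬝ᵥ S *ᵥ x
      + x ⬝ᵥ (-(Amᵀ * S + S * Am - S * Bm * R⁻¹ * Bmᵀ * S + Q)) *ᵥ x
      + x ⬝ᵥ S *ᵥ (Am *ᵥ x + Bm *ᵥ u)
      + (x ⬝ᵥ Q *ᵥ x + u ⬝ᵥ R *ᵥ u)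
      = ((Am *ᵥ x) ⬝ᵥ (S *ᵥ x) + (Bm *ᵥ u) ⬝ᵥ (S *ᵥ x))
        - (x ⬝ᵥ ((Amᵀ * S) *ᵥ x) + x ⬝ᵥ ((S * Am) *ᵥ x)
            - x ⬝ᵥ ((S * Bm * R⁻¹ * Bmᵀ * S) *ᵥ x) + x ⬝ᵥ (Q *ᵥ x))
        + (x ⬝ᵥ S *ᵥ (Am *ᵥ x) + x ⬝ᵥ S *ᵥ (Bm *ᵥ u))
        + (x ⬝ᵥ Q *ᵥ x + u ⬝ᵥ R *ᵥ u) := by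
        simp only [add_dotProduct, mulVec_add, dotProduct_add, neg_mulVec, dotProduct_neg,
          add_mulVec, sub_mulVec, dotProduct_sub]
        ring
    _ = u ⬝ᵥ w + u ⬝ᵥ w + w ⬝ᵥ (R⁻¹ *ᵥ w) + u ⬝ᵥ R *ᵥ u := by
        rw [hBu, hAx, hSB, hSA, hquad]; ring
    _ = (u + R⁻¹ *ᵥ w) ⬝ᵥ R *ᵥ (u + R⁻¹ *ᵥ w) := by
        rw [mulVec_add, hRRinv, dotProduct_add, add_dotProduct, add_dotProduct, hRv,
          dotProduct_comm w u, dotProduct_comm (R⁻¹ *ᵥ w) w]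
        ring

lemma hasDerivAt_quadForm {n : ℕ} (S : ℝ → Matrix (Fin n) (Fin n) ℝ)
    (x : ℝ → Fin n → ℝ) (S' : Matrix (Fin n) (Fin n) ℝ) (x' : Fin n → ℝ) (t : ℝ)
    (hS : HasDerivAt S S' t) (hx : HasDerivAt x x' t) :
    HasDerivAt (fun s => x s ⬝ᵥ (S s) *ᵥ (x s))
      (x' ⬝ᵥ (S t) *ᵥ (x t) + x t ⬝ᵥ S' *ᵥ (x t) + x t ⬝ᵥ (S t) *ᵥ x') t := by
  have hxi : ∀ i, HasDerivAt (fun s => x s i) (x' i) t := fun i => hasDerivAt_pi.mp hx i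
  have hSij : ∀ i j, HasDerivAt (fun s => S s i j) (S' i j) t := by
    intro i j
    have h1 : HasDerivAt (fun s => S s i) (S' i) t := hasDerivAt_pi.mp hS i
    exact hasDerivAt_pi.mp h1 j
  have key : HasDerivAt (fun s => ∑ i, ∑ j, x s i * (S s i j * x s j))
      (∑ i, ∑ j, (x' i * (S t i j * x t j)
        + x t i * (S' i j * x t j + S t i j * x' j))) t := by
    refine HasDerivAt.fun_sum fun i _ => HasDerivAt.fun_sum fun j _ => ?_
    exact (hxi i).mul ((hSij i j).mul (hxi j))
  have heq1 : (fun s => x s ⬝ᵥ (S s) *ᵥ (x s))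
      = (fun s => ∑ i, ∑ j, x s i * (S s i j * x s j)) := by
    funext s
    simp [dotProduct, mulVec, Finset.mul_sum]
  have heq2 : x' ⬝ᵥ (S t) *ᵥ (x t) + x t ⬝ᵥ S' *ᵥ (x t) + x t ⬝ᵥ (S t) *ᵥ x'
      = ∑ i, ∑ j, (x' i * (S t i j * x t j)
        + x t i * (S' i j * x t j + S t i j * x' j)) := by
    simp only [dotProduct, mulVec, Finset.mul_sum, ← Finset.sum_add_distrib]
    refine Finset.sum_congr rfl fun i _ => Finset.sum_congr rfl fun j _ => by ring
  rw [heq1, heq2]; exact key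

lemma lqr_main {n m : ℕ} (T : ℝ) (hT : 0 < T)
    (A Q : ℝ → Matrix (Fin n) (Fin n) ℝ) (B : ℝ → Matrix (Fin n) (Fin m) ℝ)
    (R : ℝ → Matrix (Fin m) (Fin m) ℝ) (M : Matrix (Fin n) (Fin n) ℝ)
    (hBc : ContinuousOn B (Set.Icc (0:ℝ) T))
    (hQcc : ContinuousOn Q (Set.Icc (0:ℝ) T))
    (hRc : ContinuousOn R (Set.Icc (0:ℝ) T))
    (hR : ∀ t ∈ Set.Icc (0:ℝ) T, (R t).PosDef)
    (S : ℝ → Matrix (Fin n) (Fin n) ℝ) (hSs : ∀ t, (S t).IsSymm)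
    (hS : ∀ t ∈ Set.Icc (0:ℝ) T, HasDerivAt S
      (-((A t)ᵀ * S t + S t * A t - S t * B t * (R t)⁻¹ * (B t)ᵀ * S t + Q t)) t)
    (hST : S T = M)
    (x₀ : Fin n → ℝ) (u : ℝ → Fin m → ℝ) (x : ℝ → Fin n → ℝ)
    (hu : ContinuousOn u (Set.Icc (0:ℝ) T))
    (hx : ∀ t ∈ Set.Icc (0:ℝ) T, HasDerivAt x
      ((A t).mulVec (x t) + (B t).mulVec (u t)) t)
    (hx0 : x 0 = x₀) :
    x T ⬝ᵥ M.mulVec (x T)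
      + ∫ t in (0:ℝ)..T, (x t ⬝ᵥ (Q t).mulVec (x t) + u t ⬝ᵥ (R t).mulVec (u t))
    = x₀ ⬝ᵥ (S 0).mulVec x₀
      + ∫ t in (0:ℝ)..T,
        ((u t + (R t)⁻¹ *ᵥ ((B t)ᵀ *ᵥ (S t *ᵥ x t))) ⬝ᵥ
          (R t) *ᵥ (u t + (R t)⁻¹ *ᵥ ((B t)ᵀ *ᵥ (S t *ᵥ x t)))) := by
  set s : Set ℝ := Set.Icc (0:ℝ) T with hsdef
  set e : ℝ → Fin m → ℝ := fun t => u t + (R t)⁻¹ *ᵥ ((B t)ᵀ *ᵥ (S t *ᵥ x t)) with he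
  set cost : ℝ → ℝ := fun t => x t ⬝ᵥ (Q t) *ᵥ (x t) + u t ⬝ᵥ (R t) *ᵥ (u t) with hcost
  set ee : ℝ → ℝ := fun t => e t ⬝ᵥ (R t) *ᵥ (e t) with hee
  have hRs : ∀ t ∈ s, (R t)ᵀ = R t := fun t ht => by
    rw [← conjTranspose_eq_transpose_of_trivial]; exact (hR t ht).1
  have hRi : ∀ t ∈ s, R t * (R t)⁻¹ = 1 := fun t ht =>
    mul_nonsing_inv _ (hR t ht).det_pos.ne'.isUnit
  -- continuity
  have cx : ContinuousOn x s := fun t ht => (hx t ht).continuousAt.continuousWithinAt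
  have cS : ContinuousOn S s := fun t ht => (hS t ht).continuousAt.continuousWithinAt
  have cRinv : ContinuousOn (fun t => (R t)⁻¹) s := by
    intro t ht
    have h : ContinuousAt Inv.inv (R t) := by
      refine continuousAt_matrix_inv (R t) ?_
      rw [Ring.inverse_eq_inv']
      exact continuousAt_inv₀ (hR t ht).det_pos.ne'
    exact h.comp_continuousWithinAt (hRc t ht)
  have cu : ContinuousOn u s := hu
  have cBt : ContinuousOn (fun t => (B t)ᵀ) s :=
    (continuous_id.matrix_transpose).comp_continuousOn hBc
  have ce : ContinuousOn e s :=
    cu.add (lqr_contOn_mulVec cRinv (lqr_contOn_mulVec cBt (lqr_contOn_mulVec cS cx)))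
  have ccost : ContinuousOn cost s :=
    (lqr_contOn_dot cx (lqr_contOn_mulVec hQcc cx)).add
      (lqr_contOn_dot cu (lqr_contOn_mulVec hRc cu))
  have cee : ContinuousOn ee s := lqr_contOn_dot ce (lqr_contOn_mulVec hRc ce)
  -- derivative of the quadratic form along the trajectory
  have hf : ∀ t ∈ s, HasDerivAt (fun r => x r ⬝ᵥ (S r) *ᵥ (x r)) (ee t - cost t) t := by
    intro t ht
    have hd := hasDerivAt_quadForm S x _ _ t (hS t ht) (hx t ht)
    have hkey := lqr_key (S t) (Q t) (A t) (B t) (R t) (hSs t) (hRs t ht) (hRi t ht)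
      (x t) (u t)
    convert hd using 1
    simp only [hee, hcost, he]
    linarith [hkey]
  -- FTC
  have huIcc : Set.uIcc (0:ℝ) T = s := Set.uIcc_of_le hT.le
  have hint : IntervalIntegrable (fun t => ee t - cost t) MeasureTheory.volume 0 T := by
    apply ContinuousOn.intervalIntegrable
    rw [huIcc]; exact cee.sub ccost
  have hftc := intervalIntegral.integral_eq_sub_of_hasDerivAt
    (f := fun r => x r ⬝ᵥ (S r) *ᵥ (x r)) (fun t ht => hf t (huIcc ▸ ht)) hint
  have hsplit : (∫ t in (0:ℝ)..T, (ee t - cost t))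
      = (∫ t in (0:ℝ)..T, ee t) - ∫ t in (0:ℝ)..T, cost t := by
    apply intervalIntegral.integral_sub
    · apply ContinuousOn.intervalIntegrable; rw [huIcc]; exact cee
    · apply ContinuousOn.intervalIntegrable; rw [huIcc]; exact ccost
  rw [hsplit] at hftc
  have hftc' : (∫ t in (0:ℝ)..T, ee t) - (∫ t in (0:ℝ)..T, cost t)
      = x T ⬝ᵥ M *ᵥ (x T) - x₀ ⬝ᵥ (S 0) *ᵥ x₀ := by
    simpa [hST, hx0] using hftc
  have h1 : (∫ t in (0:ℝ)..T, (x t ⬝ᵥ (Q t).mulVec (x t) + u t ⬝ᵥ (R t).mulVec (u t)))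
      = ∫ t in (0:ℝ)..T, cost t := rfl
  have h2 : (∫ t in (0:ℝ)..T,
        ((u t + (R t)⁻¹ *ᵥ ((B t)ᵀ *ᵥ (S t *ᵥ x t))) ⬝ᵥ
          (R t) *ᵥ (u t + (R t)⁻¹ *ᵥ ((B t)ᵀ *ᵥ (S t *ᵥ x t)))))
      = ∫ t in (0:ℝ)..T, ee t := rfl
  rw [h1, h2]
  linarith [hftc']


/-- Finite-horizon LQR feedback optimality: with `M, Q(t) ⪰ 0`, `R(t) ≻ 0`, and `S`
solving the matrix Riccati equation `−Ṡ = AᵀS + SA − SBR⁻¹BᵀS + Q`, `S(T) = M`,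
every admissible pair `(u, x)` with `ẋ = Ax + Bu`, `x(0) = x₀` has cost
`J(u) ≥ (1/2)x₀ᵀS(0)x₀`, and the feedback control `u* = −R⁻¹BᵀSx*` along the
closed-loop trajectory `ẋ* = (A − BR⁻¹BᵀS)x*`, `x*(0) = x₀`, achieves
`J(u*) = (1/2)x₀ᵀS(0)x₀`; hence `u*` is optimal. -/
theorem stmt_18 (n m : ℕ) (hn : 1 ≤ n) (hm : 1 ≤ m) (T : ℝ) (hT : 0 < T)
    (A Q : ℝ → Matrix (Fin n) (Fin n) ℝ) (B : ℝ → Matrix (Fin n) (Fin m) ℝ)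
    (R : ℝ → Matrix (Fin m) (Fin m) ℝ) (M : Matrix (Fin n) (Fin n) ℝ)
    (hA : ContinuousOn A (Set.Icc (0:ℝ) T)) (hB : ContinuousOn B (Set.Icc (0:ℝ) T))
    (hQc : ContinuousOn Q (Set.Icc (0:ℝ) T)) (hRc : ContinuousOn R (Set.Icc (0:ℝ) T))
    (hQ : ∀ t ∈ Set.Icc (0:ℝ) T, (Q t).PosSemidef) (hM : M.PosSemidef)
    (hR : ∀ t ∈ Set.Icc (0:ℝ) T, (R t).PosDef)
    (S : ℝ → Matrix (Fin n) (Fin n) ℝ) (hSs : ∀ t, (S t).IsSymm)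
    (hS : ∀ t ∈ Set.Icc (0:ℝ) T, HasDerivAt S
      (-((A t)ᵀ * S t + S t * A t - S t * B t * (R t)⁻¹ * (B t)ᵀ * S t + Q t)) t)
    (hST : S T = M)
    (x₀ : Fin n → ℝ) :
    (∀ (u : ℝ → Fin m → ℝ) (x : ℝ → Fin n → ℝ), Continuous u →
      (∀ t ∈ Set.Icc (0:ℝ) T, HasDerivAt x
        ((A t).mulVec (x t) + (B t).mulVec (u t)) t) →
      x 0 = x₀ →
      (1/2) * (x₀ ⬝ᵥ (S 0).mulVec x₀) ≤
        (1/2) * (x T ⬝ᵥ M.mulVec (x T)) +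
          (1/2) * ∫ t in (0:ℝ)..T,
            (x t ⬝ᵥ (Q t).mulVec (x t) + u t ⬝ᵥ (R t).mulVec (u t))) ∧
    (∀ xs : ℝ → Fin n → ℝ,
      (∀ t ∈ Set.Icc (0:ℝ) T, HasDerivAt xs
        ((A t - B t * (R t)⁻¹ * (B t)ᵀ * S t).mulVec (xs t)) t) →
      xs 0 = x₀ →
      (1/2) * (xs T ⬝ᵥ M.mulVec (xs T)) +
        (1/2) * ∫ t in (0:ℝ)..T,
          (xs t ⬝ᵥ (Q t).mulVec (xs t) +
            (-((R t)⁻¹.mulVec ((B t)ᵀ.mulVec ((S t).mulVec (xs t))))) ⬝ᵥ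
              (R t).mulVec
                (-((R t)⁻¹.mulVec ((B t)ᵀ.mulVec ((S t).mulVec (xs t)))))) =
      (1/2) * (x₀ ⬝ᵥ (S 0).mulVec x₀)) := by
  constructor
  · intro u x hu hx hx0
    have hmain := lqr_main T hT A Q B R M hB hQc hRc hR S hSs hS hST x₀ u x
      hu.continuousOn hx hx0
    have hnon : 0 ≤ ∫ t in (0:ℝ)..T,
        ((u t + (R t)⁻¹ *ᵥ ((B t)ᵀ *ᵥ (S t *ᵥ x t))) ⬝ᵥ
          (R t) *ᵥ (u t + (R t)⁻¹ *ᵥ ((B t)ᵀ *ᵥ (S t *ᵥ x t)))) := by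
      apply intervalIntegral.integral_nonneg hT.le
      intro t ht
      have := (hR t ht).posSemidef.dotProduct_mulVec_nonneg (u t + (R t)⁻¹ *ᵥ ((B t)ᵀ *ᵥ (S t *ᵥ x t)))
      simpa using this
    linarith [hmain, hnon]
  · intro xs hxs hx0
    set us : ℝ → Fin m → ℝ :=
      fun t => -((R t)⁻¹ *ᵥ ((B t)ᵀ *ᵥ (S t *ᵥ xs t))) with hus
    have hx' : ∀ t ∈ Set.Icc (0:ℝ) T, HasDerivAt xs
        ((A t).mulVec (xs t) + (B t).mulVec (us t)) t := by
      intro t ht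
      convert hxs t ht using 1
      simp only [hus, mulVec_neg, mulVec_mulVec, Matrix.mul_assoc, sub_mulVec,
        sub_eq_add_neg, add_mulVec, neg_mulVec]
    have cxs : ContinuousOn xs (Set.Icc (0:ℝ) T) :=
      fun t ht => (hxs t ht).continuousAt.continuousWithinAt
    have cS : ContinuousOn S (Set.Icc (0:ℝ) T) :=
      fun t ht => (hS t ht).continuousAt.continuousWithinAt
    have cRinv : ContinuousOn (fun t => (R t)⁻¹) (Set.Icc (0:ℝ) T) := by
      intro t ht
      have h : ContinuousAt Inv.inv (R t) := by
        refine continuousAt_matrix_inv (R t) ?_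
        rw [Ring.inverse_eq_inv']
        exact continuousAt_inv₀ (hR t ht).det_pos.ne'
      exact h.comp_continuousWithinAt (hRc t ht)
    have cBt : ContinuousOn (fun t => (B t)ᵀ) (Set.Icc (0:ℝ) T) :=
      (continuous_id.matrix_transpose).comp_continuousOn hB
    have cus : ContinuousOn us (Set.Icc (0:ℝ) T) :=
      (lqr_contOn_mulVec cRinv (lqr_contOn_mulVec cBt (lqr_contOn_mulVec cS cxs))).neg
    have hmain := lqr_main T hT A Q B R M hB hQc hRc hR S hSs hS hST x₀ us xs
      cus hx' hx0
    have hzero : (∫ t in (0:ℝ)..T,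
        ((us t + (R t)⁻¹ *ᵥ ((B t)ᵀ *ᵥ (S t *ᵥ xs t))) ⬝ᵥ
          (R t) *ᵥ (us t + (R t)⁻¹ *ᵥ ((B t)ᵀ *ᵥ (S t *ᵥ xs t))))) = 0 := by
      have : (fun t => (us t + (R t)⁻¹ *ᵥ ((B t)ᵀ *ᵥ (S t *ᵥ xs t))) ⬝ᵥ
          (R t) *ᵥ (us t + (R t)⁻¹ *ᵥ ((B t)ᵀ *ᵥ (S t *ᵥ xs t))))
          = fun _ => (0:ℝ) := by
        funext t
        simp [hus]
      rw [this, intervalIntegral.integral_const]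
      simp
    rw [hzero] at hmain
    linarith [hmain]
end
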